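/- Let k be a field, K:=k×k, and let H be the 8-dimensional k-vector space with basis {λ_{ab}^{cd}, G_{ab}^{cd} : (a,b),(c,d) ∈ {(1,0),(0,1)}}, extended bilinearly in the symbols λ_{ab}^{cd}:=(a,b)⊗1⊗(c,d) and G_{ab}^{cd}:=(a,b)⊗g⊗(c,d) (a,b,c,d∈k), with multiplication λ_{ab}^{cd}λ_{a'b'}^{c'd'}=λ_{aa',bb'}^{cc',dd'}, λ_{ab}^{cd}G_{a'b'}^{c'd'}=G_{aa',bb'}^{dc',cd'}, G_{ab}^{cd}λ_{a'b'}^{c'd'}=G_{ab',ba'}^{cc',dd'}, G_{ab}^{cd}G_{a'b'}^{c'd'}=λ_{ab',ba'}^{dc',cd'}, unit λ_{11}^{11}, comultiplication Δ(λ_{ab}^{cd})=λ_{ab}^{10}⊗λ_{10}^{cd}+λ_{ab}^{01}⊗λ_{01}^{cd} and Δ(G_{ab}^{cd})=G_{ab}^{10}⊗G_{01}^{cd}+G_{ab}^{01}⊗G_{10}^{cd}, counit ε(λ_{ab}^{cd})=ac+bd, ε(G_{ab}^{cd})=ad+bc, and S(λ_{ab}^{cd})=λ_{cd}^{ab}, S(G_{ab}^{cd})=G_{cd}^{ab}.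 Then H is a weak Hopf algebra with bijective antipode S; moreover Π^L(λ_{ab}^{cd})=λ_{ac,bd}^{11}, Π^L(G_{ab}^{cd})=λ_{ad,bc}^{11}, Π^R(λ_{ab}^{cd})=λ_{11}^{ac,bd} and Π^R(G_{ab}^{cd})=λ_{11}^{bc,ad}. -/

import Mathlib

open scoped TensorProduct

/-- The data of a weak Hopf algebra structure on a `k`-vector space `V`:
a multiplication, a unit, a comultiplication `Δ`, a counit `ε` and an
antipode `S`. -/
structure WeakHopfPkg (k V : Type*) [Field k] [AddCommGroup V] [Module k V] where
  mul : V →ₗ[k] V →ₗ[k] V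
  one : V
  Δ : V →ₗ[k] V ⊗[k] V
  ε : V →ₗ[k] k
  S : V →ₗ[k] V

section

variable {k V : Type*} [Field k] [AddCommGroup V] [Module k V]

/-- `Π^L(h) = ε(1⁽¹⁾h)1⁽²⁾`. -/
noncomputable def WeakHopfPkg.piL (P : WeakHopfPkg k V) (h : V) : V :=
  (TensorProduct.lid k V) ((LinearMap.rTensor V (P.ε ∘ₗ P.mul.flip h)) (P.Δ P.one))

/-- `Π^R(h) = 1⁽¹⁾ε(h1⁽²⁾)`. -/
noncomputable def WeakHopfPkg.piR (P : WeakHopfPkg k V) (h : V) : V :=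
  (TensorProduct.rid k V) ((LinearMap.lTensor V (P.ε ∘ₗ P.mul h)) (P.Δ P.one))

/-- The axioms of a weak Hopf algebra with bijective antipode, where Sweedler
sums are expressed via arbitrary finite representations of the comultiplication. -/
structure IsWeakHopfPkg (P : WeakHopfPkg k V) : Prop where
  mul_assoc : ∀ x y z : V, P.mul (P.mul x y) z = P.mul x (P.mul y z)
  one_mul : ∀ x : V, P.mul P.one x = x
  mul_one : ∀ x : V, P.mul x P.one = x
  coassoc : ∀ h : V,
    (TensorProduct.assoc k V V V) ((LinearMap.rTensor V P.Δ) (P.Δ h)) =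
      (LinearMap.lTensor V P.Δ) (P.Δ h)
  counit_left : ∀ h : V, (TensorProduct.lid k V) ((LinearMap.rTensor V P.ε) (P.Δ h)) = h
  counit_right : ∀ h : V, (TensorProduct.rid k V) ((LinearMap.lTensor V P.ε) (P.Δ h)) = h
  comul_mul : ∀ (x y : V) (n₁ : ℕ) (x₁ y₁ : Fin n₁ → V) (n₂ : ℕ) (x₂ y₂ : Fin n₂ → V),
    P.Δ x = ∑ i, x₁ i ⊗ₜ[k] y₁ i → P.Δ y = ∑ j, x₂ j ⊗ₜ[k] y₂ j →
      P.Δ (P.mul x y) = ∑ i, ∑ j, P.mul (x₁ i) (x₂ j) ⊗ₜ[k] P.mul (y₁ i) (y₂ j)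
  weak_comul_one : ∀ (n : ℕ) (x y : Fin n → V) (m : ℕ) (u v : Fin m → V),
    P.Δ P.one = ∑ i, x i ⊗ₜ[k] y i → P.Δ P.one = ∑ j, u j ⊗ₜ[k] v j →
      (LinearMap.lTensor V P.Δ) (P.Δ P.one) =
        ∑ i, ∑ j, x i ⊗ₜ[k] (P.mul (y i) (u j) ⊗ₜ[k] v j) ∧
      (LinearMap.lTensor V P.Δ) (P.Δ P.one) =
        ∑ i, ∑ j, x i ⊗ₜ[k] (P.mul (u j) (y i) ⊗ₜ[k] v j)
  weak_counit : ∀ (h l m : V) (n : ℕ) (x y : Fin n → V),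
    P.Δ l = ∑ i, x i ⊗ₜ[k] y i →
      P.ε (P.mul (P.mul h l) m) = ∑ i, P.ε (P.mul h (x i)) * P.ε (P.mul (y i) m) ∧
      P.ε (P.mul (P.mul h l) m) = ∑ i, P.ε (P.mul h (y i)) * P.ε (P.mul (x i) m)
  antipode_left : ∀ (h : V) (n : ℕ) (x y : Fin n → V),
    P.Δ h = ∑ i, x i ⊗ₜ[k] y i → ∑ i, P.mul (x i) (P.S (y i)) = P.piL h
  antipode_right : ∀ (h : V) (n : ℕ) (x y : Fin n → V),
    P.Δ h = ∑ i, x i ⊗ₜ[k] y i → ∑ i, P.mul (P.S (x i)) (y i) = P.piR h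
  antipode_mid : ∀ (h : V) (n : ℕ) (x y : Fin n → V),
    P.Δ h = ∑ i, x i ⊗ₜ[k] y i →
      ∀ (m : Fin n → ℕ) (u v : (i : Fin n) → Fin (m i) → V),
        (∀ i, P.Δ (y i) = ∑ j, u i j ⊗ₜ[k] v i j) →
          ∑ i, ∑ j, P.mul (P.mul (P.S (x i)) (u i j)) (P.S (v i j)) = P.S h
  S_bijective : Function.Bijective P.S

end

/-- The standard basis vectors of the 8-dimensional space. -/
def bas {k : Type*} [Field k] (t : Bool × Bool × Bool) : (Bool × Bool × Bool) → k :=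
  Pi.single t 1

/-- The element `λ_{ab}^{cd} = (a,b) ⊗ 1 ⊗ (c,d)` of
`H = K ⊗ k[C] ⊗ K`, realized inside the 8-dimensional space
`(Bool × Bool × Bool) → k` (first component `false` for `λ`'s, `true` for
`G`'s; the remaining components index the primitive idempotents `(1,0)`,
`(0,1)` of the two copies of `K = k × k`). -/
def lam {k : Type*} [Field k] (a b c d : k) : (Bool × Bool × Bool) → k :=
  (a * c) • bas (false, false, false) + (a * d) • bas (false, false, true) +
    (b * c) • bas (false, true, false) + (b * d) • bas (false, true, true)

/-- The element `G_{ab}^{cd} = (a,b) ⊗ g ⊗ (c,d)` of `H = K ⊗ k[C] ⊗ K`. -/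
def gee {k : Type*} [Field k] (a b c d : k) : (Bool × Bool × Bool) → k :=
  (a * c) • bas (true, false, false) + (a * d) • bas (true, false, true) +
    (b * c) • bas (true, true, false) + (b * d) • bas (true, true, true)

/-!
Once each Sweedler sum `∑ xᵢ ⊗ yᵢ` is read as a linear map applied to `Δ h`, it no longer depends
on the chosen representation, and every axiom becomes an identity between maps that are linear in
each argument. The space is spanned by the `λ_{ab}^{cd}` and `G_{ab}^{cd}`, on which all structure
maps are given by closed formulas, so each axiom reduces to a polynomial identity in the
coordinates.
-/

namespace TensorProduct

variable {k V : Type*} [Field k] [AddCommGroup V] [Module k V]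

noncomputable def tensorMul (μ : V →ₗ[k] V →ₗ[k] V) : V ⊗[k] V →ₗ[k] V ⊗[k] V →ₗ[k] V ⊗[k] V :=
  curry (map (lift μ) (lift μ) ∘ₗ (tensorTensorTensorComm k V V V V).toLinearMap)

@[simp] theorem tensorMul_tmul (μ : V →ₗ[k] V →ₗ[k] V) (x y u v : V) :
    tensorMul μ (x ⊗ₜ y) (u ⊗ₜ v) = μ x u ⊗ₜ μ y v := by
  simp [tensorMul]

/-- `insertMul μ (Δ 1) (Δ 1)` is `(Δ(1) ⊗ 1)(1 ⊗ Δ(1))`. -/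
noncomputable def insertMul (μ : V →ₗ[k] V →ₗ[k] V) :
    V ⊗[k] V →ₗ[k] V ⊗[k] V →ₗ[k] V ⊗[k] (V ⊗[k] V) :=
  curry ((TensorProduct.assoc k V V V).toLinearMap ∘ₗ
    LinearMap.rTensor V (LinearMap.lTensor V (lift μ) ∘ₗ (TensorProduct.assoc k V V V).toLinearMap) ∘ₗ
    (TensorProduct.assoc k (V ⊗[k] V) V V).symm.toLinearMap)

@[simp] theorem insertMul_tmul (μ : V →ₗ[k] V →ₗ[k] V) (x y u v : V) :
    insertMul μ (x ⊗ₜ y) (u ⊗ₜ v) = x ⊗ₜ (μ y u ⊗ₜ v) := by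
  simp [insertMul]

end TensorProduct

open TensorProduct

namespace WeakHopfPkg

variable {k V : Type*} [Field k] [AddCommGroup V] [Module k V] (P : WeakHopfPkg k V)

theorem piL_add (x y : V) : P.piL (x + y) = P.piL x + P.piL y := by
  simp only [piL, map_add, LinearMap.comp_add, LinearMap.rTensor_add, LinearMap.add_apply]

theorem piR_add (x y : V) : P.piR (x + y) = P.piR x + P.piR y := by
  simp only [piR, map_add, LinearMap.comp_add, LinearMap.lTensor_add, LinearMap.add_apply]

end WeakHopfPkg

/-- The axioms with every Sweedler sum written as a linear map applied to `Δ h` (or to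
`Δ 1 ⊗ Δ 1`), so that no choice of representation is involved. -/
theorem IsWeakHopfPkg.of_lift {k V : Type*} [Field k] [AddCommGroup V] [Module k V]
    {P : WeakHopfPkg k V}
    (mul_assoc : ∀ x y z : V, P.mul (P.mul x y) z = P.mul x (P.mul y z))
    (one_mul : ∀ x : V, P.mul P.one x = x) (mul_one : ∀ x : V, P.mul x P.one = x)
    (coassoc : ∀ h : V,
      (TensorProduct.assoc k V V V) ((LinearMap.rTensor V P.Δ) (P.Δ h)) =
        (LinearMap.lTensor V P.Δ) (P.Δ h))
    (counit_left : ∀ h : V, (TensorProduct.lid k V) ((LinearMap.rTensor V P.ε) (P.Δ h)) = h)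
    (counit_right : ∀ h : V, (TensorProduct.rid k V) ((LinearMap.lTensor V P.ε) (P.Δ h)) = h)
    (comul_mul : ∀ x y : V, P.Δ (P.mul x y) = tensorMul P.mul (P.Δ x) (P.Δ y))
    (comul_one : LinearMap.lTensor V P.Δ (P.Δ P.one) = insertMul P.mul (P.Δ P.one) (P.Δ P.one))
    (comul_one' :
      LinearMap.lTensor V P.Δ (P.Δ P.one) = insertMul P.mul.flip (P.Δ P.one) (P.Δ P.one))
    (counit_mul : ∀ h l m : V, P.ε (P.mul (P.mul h l) m) =
      lift ((LinearMap.mul k k).compl₁₂ (P.ε ∘ₗ P.mul h) (P.ε ∘ₗ P.mul.flip m)) (P.Δ l))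
    (counit_mul' : ∀ h l m : V, P.ε (P.mul (P.mul h l) m) =
      lift ((LinearMap.mul k k).flip.compl₁₂ (P.ε ∘ₗ P.mul.flip m) (P.ε ∘ₗ P.mul h)) (P.Δ l))
    (antipode_left : ∀ h : V, lift (P.mul.compl₂ P.S) (P.Δ h) = P.piL h)
    (antipode_right : ∀ h : V, lift (P.mul ∘ₗ P.S) (P.Δ h) = P.piR h)
    (antipode_mid : ∀ h : V,
      lift ((P.mul ∘ₗ P.S).compl₂ (lift (P.mul.compl₂ P.S) ∘ₗ P.Δ)) (P.Δ h) = P.S h)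
    (S_bijective : Function.Bijective P.S) : IsWeakHopfPkg P where
  mul_assoc := mul_assoc
  one_mul := one_mul
  mul_one := mul_one
  coassoc := coassoc
  counit_left := counit_left
  counit_right := counit_right
  comul_mul x y _ x₁ y₁ _ x₂ y₂ hx hy := by
    simp only [comul_mul, hx, hy, map_sum, LinearMap.coe_sum, Finset.sum_apply, tensorMul_tmul]
    exact Finset.sum_comm
  weak_comul_one _ x y _ u v hxy huv := by
    constructor
    · rw [comul_one]
      nth_rw 1 [hxy]
      simp only [huv, map_sum, LinearMap.coe_sum, Finset.sum_apply, insertMul_tmul]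
      exact Finset.sum_comm
    · rw [comul_one']
      nth_rw 1 [hxy]
      simp only [huv, map_sum, LinearMap.coe_sum, Finset.sum_apply, insertMul_tmul,
        LinearMap.flip_apply]
      exact Finset.sum_comm
  weak_counit h l m _ x y hl := by
    constructor
    · simp [counit_mul h l m, hl]
    · simp [counit_mul' h l m, hl, mul_comm]
  antipode_left h _ x y hh := by simp [← antipode_left, hh]
  antipode_right h _ x y hh := by simp [← antipode_right, hh]
  antipode_mid h _ x y hh _ u v huv := by
    simp [← antipode_mid h, hh, huv, mul_assoc]
  S_bijective := S_bijective

section LamGee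

variable {k : Type*} [Field k]

@[simp] theorem lam_left_zero (c d : k) : lam 0 0 c d = 0 := by simp [lam]
@[simp] theorem lam_right_zero (a b : k) : lam a b 0 0 = 0 := by simp [lam]
@[simp] theorem gee_left_zero (c d : k) : gee 0 0 c d = 0 := by simp [gee]
@[simp] theorem gee_right_zero (a b : k) : gee a b 0 0 = 0 := by simp [gee]

theorem lamGee_induction {motive : (Bool × Bool × Bool → k) → Prop}
    (lam : ∀ a b c d, motive (lam a b c d)) (gee : ∀ a b c d, motive (gee a b c d))
    (add : ∀ x y, motive x → motive y → motive (x + y)) (x : Bool × Bool × Bool → k) :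
    motive x := by
  have smul_bas : ∀ t (c : k), motive (c • bas t) := by
    rintro ⟨_ | _, _ | _, _ | _⟩ c
    · simpa [_root_.lam] using lam c 0 1 0
    · simpa [_root_.lam] using lam c 0 0 1
    · simpa [_root_.lam] using lam 0 c 1 0
    · simpa [_root_.lam] using lam 0 c 0 1
    · simpa [_root_.gee] using gee c 0 1 0
    · simpa [_root_.gee] using gee c 0 0 1
    · simpa [_root_.gee] using gee 0 c 1 0
    · simpa [_root_.gee] using gee 0 c 0 1
  rw [← Finset.univ_sum_single x]
  refine Finset.sum_induction _ motive add (by simpa using lam 0 0 0 0) fun t _ => ?_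
  simpa [bas, ← Pi.single_smul'] using smul_bas t (x t)

structure IsLamGeePkg (P : WeakHopfPkg k (Bool × Bool × Bool → k)) : Prop where
  mul_lam_lam : ∀ a b c d a' b' c' d' : k,
    P.mul (lam a b c d) (lam a' b' c' d') = lam (a * a') (b * b') (c * c') (d * d')
  mul_lam_gee : ∀ a b c d a' b' c' d' : k,
    P.mul (lam a b c d) (gee a' b' c' d') = gee (a * a') (b * b') (d * c') (c * d')
  mul_gee_lam : ∀ a b c d a' b' c' d' : k,
    P.mul (gee a b c d) (lam a' b' c' d') = gee (a * b') (b * a') (c * c') (d * d')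
  mul_gee_gee : ∀ a b c d a' b' c' d' : k,
    P.mul (gee a b c d) (gee a' b' c' d') = lam (a * b') (b * a') (d * c') (c * d')
  one_eq : P.one = lam 1 1 1 1
  comul_lam : ∀ a b c d : k,
    P.Δ (lam a b c d) = lam a b 1 0 ⊗ₜ[k] lam 1 0 c d + lam a b 0 1 ⊗ₜ[k] lam 0 1 c d
  comul_gee : ∀ a b c d : k,
    P.Δ (gee a b c d) = gee a b 1 0 ⊗ₜ[k] gee 0 1 c d + gee a b 0 1 ⊗ₜ[k] gee 1 0 c d
  counit_lam : ∀ a b c d : k, P.ε (lam a b c d) = a * c + b * d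
  counit_gee : ∀ a b c d : k, P.ε (gee a b c d) = a * d + b * c
  antipode_lam : ∀ a b c d : k, P.S (lam a b c d) = lam c d a b
  antipode_gee : ∀ a b c d : k, P.S (gee a b c d) = gee c d a b

namespace IsLamGeePkg

variable {P : WeakHopfPkg k (Bool × Bool × Bool → k)} (hP : IsLamGeePkg P)
include hP

theorem mul_assoc (x y z : Bool × Bool × Bool → k) :
    P.mul (P.mul x y) z = P.mul x (P.mul y z) := by
  induction x using lamGee_induction generalizing y z with
  | add x x' hx hx' => simp only [map_add, LinearMap.add_apply, hx, hx']
  | _ =>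
    induction y using lamGee_induction generalizing z with
    | add y y' hy hy' => simp only [map_add, LinearMap.add_apply, hy, hy']
    | _ =>
      induction z using lamGee_induction with
      | add z z' hz hz' => simp only [map_add, hz, hz']
      | _ =>
        simp only [hP.mul_lam_lam, hP.mul_lam_gee, hP.mul_gee_lam, hP.mul_gee_gee]
        congr 1 <;> ring

theorem one_mul (x : Bool × Bool × Bool → k) : P.mul P.one x = x := by
  induction x using lamGee_induction with
  | add x y hx hy => simp only [map_add, hx, hy]
  | _ => simp only [hP.one_eq, hP.mul_lam_lam, hP.mul_lam_gee, _root_.one_mul]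

theorem mul_one (x : Bool × Bool × Bool → k) : P.mul x P.one = x := by
  induction x using lamGee_induction with
  | add x y hx hy => simp only [map_add, LinearMap.add_apply, hx, hy]
  | _ => simp only [hP.one_eq, hP.mul_lam_lam, hP.mul_gee_lam, _root_.mul_one]

theorem coassoc (h : Bool × Bool × Bool → k) :
    TensorProduct.assoc k _ _ _ (LinearMap.rTensor _ P.Δ (P.Δ h)) =
      LinearMap.lTensor _ P.Δ (P.Δ h) := by
  induction h using lamGee_induction with
  | add x y hx hy => simp only [map_add, hx, hy]
  | _ =>
    simp only [hP.comul_lam, hP.comul_gee, map_add, LinearMap.rTensor_tmul,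
      LinearMap.lTensor_tmul, TensorProduct.assoc_tmul, TensorProduct.add_tmul,
      TensorProduct.tmul_add]
    abel

theorem counit_left (h : Bool × Bool × Bool → k) :
    TensorProduct.lid k _ (LinearMap.rTensor _ P.ε (P.Δ h)) = h := by
  induction h using lamGee_induction with
  | add x y hx hy => simp only [map_add, hx, hy]
  | _ =>
    simp only [hP.comul_lam, hP.comul_gee, map_add, LinearMap.rTensor_tmul,
      TensorProduct.lid_tmul, hP.counit_lam, hP.counit_gee]
    simp only [lam, gee]
    module

theorem counit_right (h : Bool × Bool × Bool → k) :
    TensorProduct.rid k _ (LinearMap.lTensor _ P.ε (P.Δ h)) = h := by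
  induction h using lamGee_induction with
  | add x y hx hy => simp only [map_add, hx, hy]
  | _ =>
    simp only [hP.comul_lam, hP.comul_gee, map_add, LinearMap.lTensor_tmul,
      TensorProduct.rid_tmul, hP.counit_lam, hP.counit_gee]
    simp only [lam, gee]
    module

theorem comul_mul (x y : Bool × Bool × Bool → k) :
    P.Δ (P.mul x y) = tensorMul P.mul (P.Δ x) (P.Δ y) := by
  induction x using lamGee_induction generalizing y with
  | add x x' hx hx' => simp only [map_add, LinearMap.add_apply, hx, hx']
  | _ =>
    induction y using lamGee_induction with
    | add y y' hy hy' => simp only [map_add, hy, hy']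
    | _ =>
      simp only [hP.mul_lam_lam, hP.mul_lam_gee, hP.mul_gee_lam, hP.mul_gee_gee, hP.comul_lam,
        hP.comul_gee, map_add, LinearMap.add_apply, tensorMul_tmul, _root_.mul_one, mul_zero,
        lam_right_zero, lam_left_zero, gee_right_zero, gee_left_zero, TensorProduct.tmul_zero,
        add_zero, zero_add]

theorem comul_one :
    LinearMap.lTensor _ P.Δ (P.Δ P.one) = insertMul P.mul (P.Δ P.one) (P.Δ P.one) := by
  simp only [hP.one_eq, hP.comul_lam, map_add, LinearMap.add_apply, LinearMap.lTensor_tmul,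
    insertMul_tmul, hP.mul_lam_lam, TensorProduct.tmul_add, _root_.mul_one, mul_zero]
  abel

theorem comul_one' :
    LinearMap.lTensor _ P.Δ (P.Δ P.one) = insertMul P.mul.flip (P.Δ P.one) (P.Δ P.one) := by
  simp only [hP.one_eq, hP.comul_lam, map_add, LinearMap.add_apply, LinearMap.lTensor_tmul,
    insertMul_tmul, LinearMap.flip_apply, hP.mul_lam_lam, TensorProduct.tmul_add,
    _root_.mul_one, mul_zero]
  abel

theorem counit_mul (h l m : Bool × Bool × Bool → k) :
    P.ε (P.mul (P.mul h l) m) =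
      lift ((LinearMap.mul k k).compl₁₂ (P.ε ∘ₗ P.mul h) (P.ε ∘ₗ P.mul.flip m)) (P.Δ l) := by
  induction l using lamGee_induction generalizing h m with
  | add l l' hl hl' => simp only [map_add, LinearMap.add_apply, hl, hl']
  | _ =>
    simp only [hP.comul_lam, hP.comul_gee, map_add, lift.tmul, LinearMap.compl₁₂_apply,
      LinearMap.comp_apply, LinearMap.flip_apply, LinearMap.mul_apply']
    induction h using lamGee_induction generalizing m with
    | add h h' hh hh' => simp only [map_add, LinearMap.add_apply, hh, hh']; ring
    | _ =>
      induction m using lamGee_induction with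
      | add m m' hm hm' => simp only [map_add, hm, hm']; ring
      | _ =>
        simp only [hP.mul_lam_lam, hP.mul_lam_gee, hP.mul_gee_lam, hP.mul_gee_gee,
          hP.counit_lam, hP.counit_gee]
        ring

theorem counit_mul' (h l m : Bool × Bool × Bool → k) :
    P.ε (P.mul (P.mul h l) m) =
      lift ((LinearMap.mul k k).flip.compl₁₂ (P.ε ∘ₗ P.mul.flip m) (P.ε ∘ₗ P.mul h)) (P.Δ l) := by
  induction l using lamGee_induction generalizing h m with
  | add l l' hl hl' => simp only [map_add, LinearMap.add_apply, hl, hl']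
  | _ =>
    simp only [hP.comul_lam, hP.comul_gee, map_add, lift.tmul, LinearMap.compl₁₂_apply,
      LinearMap.comp_apply, LinearMap.flip_apply, LinearMap.mul_apply']
    induction h using lamGee_induction generalizing m with
    | add h h' hh hh' => simp only [map_add, LinearMap.add_apply, hh, hh']; ring
    | _ =>
      induction m using lamGee_induction with
      | add m m' hm hm' => simp only [map_add, hm, hm']; ring
      | _ =>
        simp only [hP.mul_lam_lam, hP.mul_lam_gee, hP.mul_gee_lam, hP.mul_gee_gee,
          hP.counit_lam, hP.counit_gee]
        ring

theorem piL_lam (a b c d : k) : P.piL (lam a b c d) = lam (a * c) (b * d) 1 1 := by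
  simp only [WeakHopfPkg.piL, hP.one_eq, hP.comul_lam, map_add, LinearMap.rTensor_tmul,
    TensorProduct.lid_tmul, LinearMap.comp_apply, LinearMap.flip_apply, hP.mul_lam_lam,
    hP.counit_lam]
  simp only [lam]
  module

theorem piL_gee (a b c d : k) : P.piL (gee a b c d) = lam (a * d) (b * c) 1 1 := by
  simp only [WeakHopfPkg.piL, hP.one_eq, hP.comul_lam, map_add, LinearMap.rTensor_tmul,
    TensorProduct.lid_tmul, LinearMap.comp_apply, LinearMap.flip_apply, hP.mul_lam_gee,
    hP.counit_gee]
  simp only [lam]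
  module

theorem piR_lam (a b c d : k) : P.piR (lam a b c d) = lam 1 1 (a * c) (b * d) := by
  simp only [WeakHopfPkg.piR, hP.one_eq, hP.comul_lam, map_add, LinearMap.lTensor_tmul,
    TensorProduct.rid_tmul, LinearMap.comp_apply, hP.mul_lam_lam, hP.counit_lam]
  simp only [lam]
  module

theorem piR_gee (a b c d : k) : P.piR (gee a b c d) = lam 1 1 (b * c) (a * d) := by
  simp only [WeakHopfPkg.piR, hP.one_eq, hP.comul_lam, map_add, LinearMap.lTensor_tmul,
    TensorProduct.rid_tmul, LinearMap.comp_apply, hP.mul_gee_lam, hP.counit_gee]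
  simp only [lam]
  module

theorem antipode_left (h : Bool × Bool × Bool → k) :
    lift (P.mul.compl₂ P.S) (P.Δ h) = P.piL h := by
  induction h using lamGee_induction with
  | add x y hx hy => simp only [map_add, WeakHopfPkg.piL_add, hx, hy]
  | lam a b c d =>
    simp only [hP.comul_lam, map_add, lift.tmul, LinearMap.compl₂_apply, hP.antipode_lam,
      hP.mul_lam_lam, hP.piL_lam]
    simp only [lam]
    module
  | gee a b c d =>
    simp only [hP.comul_gee, map_add, lift.tmul, LinearMap.compl₂_apply, hP.antipode_gee,
      hP.mul_gee_gee, hP.piL_gee]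
    simp only [lam]
    module

theorem antipode_right (h : Bool × Bool × Bool → k) :
    lift (P.mul ∘ₗ P.S) (P.Δ h) = P.piR h := by
  induction h using lamGee_induction with
  | add x y hx hy => simp only [map_add, WeakHopfPkg.piR_add, hx, hy]
  | lam a b c d =>
    simp only [hP.comul_lam, map_add, lift.tmul, LinearMap.comp_apply, hP.antipode_lam,
      hP.mul_lam_lam, hP.piR_lam]
    simp only [lam]
    module
  | gee a b c d =>
    simp only [hP.comul_gee, map_add, lift.tmul, LinearMap.comp_apply, hP.antipode_gee,
      hP.mul_gee_gee, hP.piR_gee]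
    simp only [lam]
    module

/-- `S(h⁽¹⁾)(h⁽²⁾S(h⁽³⁾)) = S(h)`; the inner factor is `Π^L(h⁽²⁾)` by `antipode_left`. -/
theorem antipode_mid (h : Bool × Bool × Bool → k) :
    lift ((P.mul ∘ₗ P.S).compl₂ (lift (P.mul.compl₂ P.S) ∘ₗ P.Δ)) (P.Δ h) = P.S h := by
  induction h using lamGee_induction with
  | add x y hx hy => simp only [map_add, hx, hy]
  | lam a b c d =>
    rw [hP.comul_lam]
    simp only [map_add, lift.tmul, LinearMap.compl₂_apply, LinearMap.comp_apply,
      hP.antipode_left, hP.piL_lam, hP.antipode_lam, hP.mul_lam_lam]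
    simp only [lam]
    module
  | gee a b c d =>
    rw [hP.comul_gee]
    simp only [map_add, lift.tmul, LinearMap.compl₂_apply, LinearMap.comp_apply,
      hP.antipode_left, hP.piL_gee, hP.antipode_gee, hP.mul_gee_lam]
    simp only [gee]
    module

theorem antipode_involutive : Function.Involutive P.S := by
  intro x
  induction x using lamGee_induction with
  | add x y hx hy => simp only [map_add, hx, hy]
  | _ => simp only [hP.antipode_lam, hP.antipode_gee]

theorem isWeakHopfPkg : IsWeakHopfPkg P :=
  .of_lift hP.mul_assoc hP.one_mul hP.mul_one hP.coassoc hP.counit_left hP.counit_right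
    hP.comul_mul hP.comul_one hP.comul_one' hP.counit_mul hP.counit_mul' hP.antipode_left
    hP.antipode_right hP.antipode_mid hP.antipode_involutive.bijective

end IsLamGeePkg

end LamGee

/-- the 8-dimensional space `H = K ⊗ k[C] ⊗ K` spanned by the
`λ_{ab}^{cd}` and `G_{ab}^{cd}`, with the indicated multiplication, unit,
comultiplication, counit and antipode, is a weak Hopf algebra with bijective
antipode, and `Π^L`, `Π^R` are given by the indicated formulas. -/
theorem statement19 {k : Type*} [Field k] (P : WeakHopfPkg k ((Bool × Bool × Bool) → k))
    (hll : ∀ a b c d a' b' c' d' : k,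
      P.mul (lam a b c d) (lam a' b' c' d') = lam (a * a') (b * b') (c * c') (d * d'))
    (hlg : ∀ a b c d a' b' c' d' : k,
      P.mul (lam a b c d) (gee a' b' c' d') = gee (a * a') (b * b') (d * c') (c * d'))
    (hgl : ∀ a b c d a' b' c' d' : k,
      P.mul (gee a b c d) (lam a' b' c' d') = gee (a * b') (b * a') (c * c') (d * d'))
    (hgg : ∀ a b c d a' b' c' d' : k,
      P.mul (gee a b c d) (gee a' b' c' d') = lam (a * b') (b * a') (d * c') (c * d'))
    (hone : P.one = lam 1 1 1 1)
    (hΔl : ∀ a b c d : k,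
      P.Δ (lam a b c d) = lam a b 1 0 ⊗ₜ[k] lam 1 0 c d + lam a b 0 1 ⊗ₜ[k] lam 0 1 c d)
    (hΔg : ∀ a b c d : k,
      P.Δ (gee a b c d) = gee a b 1 0 ⊗ₜ[k] gee 0 1 c d + gee a b 0 1 ⊗ₜ[k] gee 1 0 c d)
    (hεl : ∀ a b c d : k, P.ε (lam a b c d) = a * c + b * d)
    (hεg : ∀ a b c d : k, P.ε (gee a b c d) = a * d + b * c)
    (hSl : ∀ a b c d : k, P.S (lam a b c d) = lam c d a b)
    (hSg : ∀ a b c d : k, P.S (gee a b c d) = gee c d a b) :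
    IsWeakHopfPkg P ∧
      (∀ a b c d : k, P.piL (lam a b c d) = lam (a * c) (b * d) 1 1) ∧
      (∀ a b c d : k, P.piL (gee a b c d) = lam (a * d) (b * c) 1 1) ∧
      (∀ a b c d : k, P.piR (lam a b c d) = lam 1 1 (a * c) (b * d)) ∧
      (∀ a b c d : k, P.piR (gee a b c d) = lam 1 1 (b * c) (a * d)) := by
  have hP : IsLamGeePkg P := ⟨hll, hlg, hgl, hgg, hone, hΔl, hΔg, hεl, hεg, hSl, hSg⟩
  exact ⟨hP.isWeakHopfPkg, hP.piL_lam, hP.piL_gee, hP.piR_lam, hP.piR_gee⟩
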